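/- arXiv:2507.09773 — 2 statements merged into one kernel-verified Lean document; each statement's English description precedes it below -/
import Mathlib

section
/- Let ℓ be a prime, R a commutative ring, and c : ℤ/ℓℤ → R any function. Then Σ_{w ∈ S_ℓ} Π_{i ∈ ℤ/ℓℤ} c(i + w(i)) ≡ Σ_{k ∈ ℤ/ℓℤ} c(k)^ℓ modulo the ideal ℓR, where S_ℓ is the group of permutations of ℤ/ℓℤ. -/
/-!
Let `ZMod ℓ` act on `S_ℓ` by `k • w = τ w τ` with `τ i = i - k`. This replaces the function
`i ↦ i + w i` by its precomposition with `τ`, so `w ↦ ∏ i, c (i + w i)` is constant on orbits.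
The group has prime order, so an orbit either is a single point or has `ℓ` elements, and modulo `ℓ`
only the fixed points survive. These are the `w = (k - ·)`, for which `i + w i = k` is constant and
the product is `c k ^ ℓ`.
-/

open Finset MulAction

namespace IsPGroup

variable {p : ℕ} [Fact p.Prime] {G X R : Type*} [Group G] [MulAction G X] [CommRing R]

theorem dvd_card_orbit (hG : IsPGroup p G) {x : X} [Finite (orbit G x)]
    (hx : x ∉ fixedPoints G X) : p ∣ Nat.card (orbit G x) := by
  obtain ⟨n, hn⟩ := hG.card_orbit x
  have := Fintype.ofFinite (orbit G x)
  rw [mem_fixedPoints_iff_card_orbit_eq_one, ← Nat.card_eq_fintype_card, hn] at hx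
  rw [hn]
  exact dvd_pow_self p (by rintro rfl; exact hx (pow_zero p))

theorem sum_sub_sum_fixedPoints_mem_span [Fintype X] [DecidablePred (· ∈ fixedPoints G X)]
    (hG : IsPGroup p G) (f : X → R) (hf : ∀ (g : G) x, f (g • x) = f x) :
    ∑ x, f x - ∑ x with x ∈ fixedPoints G X, f x ∈ Ideal.span {(p : R)} := by
  classical
  rw [← sum_filter_add_sum_filter_not univ (· ∈ fixedPoints G X), add_sub_cancel_left,
    ← sum_fiberwise _ (fun x => (orbit G x).toFinset : X → Finset X)]
  refine Ideal.sum_mem _ fun O _ => ?_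
  set S := univ.filter (fun y : X => y ∉ fixedPoints G X) with hS
  obtain hO | ⟨x, hx⟩ := (S.filter fun y => (orbit G y).toFinset = O).eq_empty_or_nonempty
  · rw [hO, sum_empty]
    exact zero_mem _
  simp only [hS, mem_filter, mem_univ, true_and] at hx
  have hfiber : {y ∈ S | (orbit G y).toFinset = O} = (orbit G x).toFinset := by
    ext y
    simp only [hS, mem_filter, mem_univ, true_and, Set.mem_toFinset, ← hx.2, Set.toFinset_inj,
      orbit_eq_iff]
    refine and_iff_right_of_imp fun hy => ?_
    rw [← subsingleton_orbit_iff_mem_fixedPoints, orbit_eq_iff.mpr hy,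
      subsingleton_orbit_iff_mem_fixedPoints]
    exact hx.1
  rw [hfiber, sum_eq_card_nsmul (b := f x) ?_]
  · rw [nsmul_eq_mul, Set.toFinset_card, ← Nat.card_eq_fintype_card]
    exact Ideal.mul_mem_right _ _
      (Ideal.mem_span_singleton.mpr (Nat.cast_dvd_cast (hG.dvd_card_orbit hx.1)))
  · rintro _ hy
    obtain ⟨g, rfl⟩ := Set.mem_toFinset.1 hy
    exact hf g x

end IsPGroup

section Shift

variable {A : Type*} [AddCommGroup A]

variable (A) in
def shiftHom : Multiplicative A →* Equiv.Perm (Equiv.Perm A) :=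
  MonoidHom.mk' (fun k => (Equiv.mulRight (Equiv.subRight k.toAdd)).trans
    (Equiv.mulLeft (Equiv.subRight k.toAdd))) fun a b => by
      ext w i
      simp [sub_sub, add_comm]

@[simp]
theorem shiftHom_apply_apply (k : Multiplicative A) (w : Equiv.Perm A) (i : A) :
    shiftHom A k w i = w (i - k.toAdd) - k.toAdd := rfl

theorem prod_add_shiftHom_apply [Fintype A] {M : Type*} [CommMonoid M] (c : A → M)
    (k : Multiplicative A) (w : Equiv.Perm A) :
    ∏ i, c (i + shiftHom A k w i) = ∏ i, c (i + w i) := by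
  refine Fintype.prod_equiv (Equiv.subRight k.toAdd) _ _ fun i => ?_
  simp only [shiftHom_apply_apply, Equiv.subRight_apply]
  congr 1
  abel

theorem forall_shiftHom_apply_eq_self_iff {w : Equiv.Perm A} :
    (∀ k, shiftHom A k w = w) ↔ w = Equiv.subLeft (w 0) := by
  constructor
  · intro h
    ext i
    simpa using (congrArg (· i) (h (Multiplicative.ofAdd i))).symm
  · rintro h k
    rw [h]
    ext i
    simp only [shiftHom_apply_apply, Equiv.subLeft_apply]
    abel

theorem sum_filter_forall_shiftHom_eq_self [Fintype A] [DecidableEq A] {R : Type*}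
    [CommSemiring R] (c : A → R) :
    ∑ w with ∀ k, shiftHom A k w = w, ∏ i, c (i + w i) = ∑ k, c k ^ Fintype.card A := by
  simp only [forall_shiftHom_apply_eq_self_iff]
  refine sum_nbij' (fun w => w 0) Equiv.subLeft (by simp) (by simp) ?_ (by simp) ?_
  · exact fun w hw => (mem_filter.mp hw).2.symm
  · intro w hw
    rw [(mem_filter.mp hw).2]
    simp [prod_const]

end Shift

/-- For a prime `ℓ`, a commutative ring `R` and any `c : ℤ/ℓℤ → R`, we have
`Σ_{w ∈ S_ℓ} Π_{i} c (i + w i) ≡ Σ_k c k ^ ℓ` modulo the ideal `ℓR`. -/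
theorem stmt_7 (ℓ : ℕ) (hℓ : ℓ.Prime) [NeZero ℓ] {R : Type*} [CommRing R]
    (c : ZMod ℓ → R) :
    (∑ w : Equiv.Perm (ZMod ℓ), ∏ i : ZMod ℓ, c (i + w i)) -
      (∑ k : ZMod ℓ, c k ^ ℓ) ∈ Ideal.span {(ℓ : R)} := by
  have : Fact ℓ.Prime := ⟨hℓ⟩
  let := MulAction.compHom (Equiv.Perm (ZMod ℓ)) (shiftHom (ZMod ℓ))
  classical
  have key := IsPGroup.sum_sub_sum_fixedPoints_mem_span
    (ZModModule.isPGroup_multiplicative (n := ℓ) (G := ZMod ℓ))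
    (fun w : Equiv.Perm (ZMod ℓ) => ∏ i, c (i + w i)) (prod_add_shiftHom_apply c)
  have hfixed : ∑ w with w ∈ fixedPoints (Multiplicative (ZMod ℓ)) (Equiv.Perm (ZMod ℓ)),
      ∏ i, c (i + w i) = ∑ k, c k ^ ℓ := by
    simpa only [ZMod.card, mem_fixedPoints, compHom_smul_def, Equiv.Perm.smul_def] using
      sum_filter_forall_shiftHom_eq_self c
  rwa [hfixed] at key
end

section
/- Let G be a finite group with an automorphism σ of prime order ℓ, let Γ = ⟨σ⟩, let H ≤ G be a σ-stable subgroup, and let V be a module for H ⋊ Γ over a commutative ring R in which ℓ is invertible or not—no invertibility needed. Suppose the natural map G^σ/H^σ → (G/H)^σ is a bijection. Then for i ∈ {0,1}, restriction of functions from G to G^σ induces an isomorphism of R[G^σ]-modules Ĥ^i(Γ, Ind_H^G V) ≅ Ind_{H^σ}^{G^σ} (Ĥ^i(Γ, V)), where Γ acts on Ind_H^G V by (σ·f)(g) = σ(f(σ^{-1}(g))). -/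
/-!
Functions in `Ind_H^G V` are determined by their values on the right cosets `H \ G`, which `σ`
permutes; as `ℓ` is prime, every orbit is either a single `σ`-stable coset or free of size `ℓ`.
On the union of the free orbits, choosing one coset per orbit gives projections `P k` (onto the
cosets `k` steps away from the chosen one) with `σ P k = P (k + 1) σ` and `∑ P k = 1`, so this
part is an induced `Γ`-module: both Tate groups vanish on it, with explicit preimages under the
norm and under `1 - σ`. On a `σ`-stable coset the hypothesis provides a `σ`-fixed representative
`r`, and `f ↦ f r` identifies the functions on `H r` with `V` compatibly with `σ`; extending
values from these representatives inverts restriction to `G^σ` on the stable part.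
-/

open Finset

namespace TateInduced

section PrimeOrderPerm

variable {α : Type*} {ℓ : ℕ} {τ : Equiv.Perm α}

theorem injOn_pow_apply (hℓ : ℓ.Prime) (hτ : τ ^ ℓ = 1) {q : α} (hq : τ q ≠ q) :
    Set.InjOn (fun k => (τ ^ k) q) (Set.Iio ℓ) := by
  have hper : Function.IsPeriodicPt τ ℓ q := by
    rw [Function.IsPeriodicPt, Function.IsFixedPt, Equiv.Perm.iterate_eq_pow, hτ]
    rfl
  have hmin : Function.minimalPeriod τ q = ℓ :=
    (hℓ.eq_one_or_self_of_dvd _ hper.minimalPeriod_dvd).resolve_left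
      fun h => hq (Function.minimalPeriod_eq_one_iff_isFixedPt.1 h)
  simpa only [hmin, Equiv.Perm.iterate_eq_pow] using
    Function.iterate_injOn_Iio_minimalPeriod (f := τ) (x := q)

theorem exists_pow_apply_eq_of_sameCycle (hℓ : ℓ ≠ 0) (hτ : τ ^ ℓ = 1) {q b : α}
    (h : τ.SameCycle q b) : ∃ k < ℓ, (τ ^ k) q = b := by
  obtain ⟨i, rfl⟩ := h
  have hℓ' : (0 : ℤ) < ℓ := by exact_mod_cast Nat.pos_of_ne_zero hℓ
  have := Int.emod_lt_of_pos i hℓ'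
  refine ⟨(i % ℓ).toNat, by omega, ?_⟩
  rw [← zpow_natCast, Int.toNat_of_nonneg (Int.emod_nonneg _ hℓ'.ne'),
    ← zpow_eq_zpow_emod i (by simpa using hτ)]

def IsOrbitRep (τ : Equiv.Perm α) (q : α) : Prop :=
  (Quotient.mk (Equiv.Perm.SameCycle.setoid τ) q).out = q

theorem existsUnique_isOrbitRep_pow_apply (hℓ : ℓ.Prime) (hτ : τ ^ ℓ = 1) {q : α}
    (hq : τ q ≠ q) : ∃! k, k < ℓ ∧ IsOrbitRep τ ((τ ^ k) q) := by
  have hmk : ∀ k : ℕ,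
      Quotient.mk (Equiv.Perm.SameCycle.setoid τ) ((τ ^ k) q) = Quotient.mk _ q := fun k =>
    Quotient.sound (Equiv.Perm.sameCycle_pow_left.2 (Equiv.Perm.SameCycle.refl _ _))
  obtain ⟨k, hk, hkq⟩ := exists_pow_apply_eq_of_sameCycle hℓ.ne_zero hτ
    (Quotient.mk_out (s := Equiv.Perm.SameCycle.setoid τ) q).symm
  refine ⟨k, ⟨hk, by rw [IsOrbitRep, hmk, hkq]⟩, fun j ⟨hj, hjq⟩ => ?_⟩
  refine injOn_pow_apply hℓ hτ hq hj hk ?_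
  change (τ ^ j) q = (τ ^ k) q
  rw [IsOrbitRep, hmk] at hjq
  rw [← hjq, hkq]

theorem apply_pow_apply_eq_iff (τ : Equiv.Perm α) (k : ℕ) (q : α) :
    τ ((τ ^ k) q) = (τ ^ k) q ↔ τ q = q := by
  rw [← Equiv.Perm.mul_apply, ← pow_succ', pow_succ, Equiv.Perm.mul_apply,
    (τ ^ k).injective.eq_iff]

end PrimeOrderPerm

section InducedOperators

variable {R M : Type*} [Semiring R] [AddCommMonoid M] [Module R M]
  {S : Module.End R M} {P : ℕ → Module.End R M}

theorem pow_mul_eq_mul_pow (hP : ∀ k, S * P k = P (k + 1) * S) (k j : ℕ) :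
    S ^ j * P k = P (k + j) * S ^ j := by
  induction j with
  | zero => simp
  | succ j ih =>
    rw [pow_succ', mul_assoc, ih, ← mul_assoc, hP, mul_assoc, ← pow_succ', ← add_assoc]

theorem sum_pow_apply_eq_of_apply_eq (hP : ∀ k, S * P k = P (k + 1) * S) {f : M}
    (hf : S f = f) (ℓ : ℕ) :
    (∑ i ∈ range ℓ, S ^ i) (P 0 f) = ∑ k ∈ range ℓ, P k f := by
  rw [LinearMap.sum_apply]
  refine sum_congr rfl fun i _ => ?_
  rw [← Module.End.mul_apply, pow_mul_eq_mul_pow hP, zero_add, Module.End.mul_apply,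
    Module.End.pow_apply, Function.iterate_fixed hf]

end InducedOperators

section InducedOperatorsGroup

variable {R M : Type*} [Semiring R] [AddCommGroup M] [Module R M]
  {S : Module.End R M} {P : ℕ → Module.End R M}

theorem sum_range_succ_eq_of_periodic {u : ℕ → M} {ℓ : ℕ} (hu : u ℓ = u 0) :
    ∑ k ∈ range ℓ, u (k + 1) = ∑ k ∈ range ℓ, u k := by
  have h := (sum_range_succ' u ℓ).symm.trans (sum_range_succ u ℓ)
  rwa [hu, add_left_inj] at h

theorem sub_apply_sum_eq_of_sum_pow_apply_eq_zero (hP : ∀ k, S * P k = P (k + 1) * S)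
    {ℓ : ℕ} (hPℓ : P ℓ = P 0) {f : M} (hf : (∑ j ∈ range ℓ, S ^ j) f = 0) :
    (1 - S) (∑ k ∈ range ℓ, P k ((∑ j ∈ range k, S ^ j) f)) = ∑ k ∈ range ℓ, P k f := by
  set B : ℕ → M := fun k => P k ((∑ j ∈ range k, S ^ j) f)
  have hSsum : ∀ k, S ((∑ j ∈ range k, S ^ j) f) = (∑ j ∈ range (k + 1), S ^ j) f - f := by
    intro k
    rw [sum_range_succ', LinearMap.add_apply, pow_zero, Module.End.one_apply,
      add_sub_cancel_right, ← Module.End.mul_apply, Finset.mul_sum]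
    simp only [pow_succ']
  have hSB : ∀ k, S (B k) = B (k + 1) - P (k + 1) f := fun k => by
    rw [← Module.End.mul_apply, hP, Module.End.mul_apply, hSsum, map_sub]
  have hB : ∑ k ∈ range ℓ, B (k + 1) = ∑ k ∈ range ℓ, B k :=
    sum_range_succ_eq_of_periodic <| by
      simp only [B, hf, map_zero, range_zero, sum_empty, LinearMap.zero_apply]
  have hPf : ∑ k ∈ range ℓ, P (k + 1) f = ∑ k ∈ range ℓ, P k f :=
    sum_range_succ_eq_of_periodic (u := fun k => P k f) (by rw [hPℓ])
  rw [LinearMap.sub_apply, Module.End.one_apply, map_sum]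
  change ∑ k ∈ range ℓ, B k - ∑ k ∈ range ℓ, S (B k) = _
  simp only [hSB, sum_sub_distrib, hB, hPf, sub_sub_cancel]

end InducedOperatorsGroup

section Cosets

variable {G : Type*} [Group G] {σ : MulAut G} {H : Subgroup G}

theorem pow_apply_mem (hH : ∀ g ∈ H, σ g ∈ H) (n : ℕ) {a : G} (ha : a ∈ H) :
    (σ ^ n) a ∈ H := by
  induction n with
  | zero => exact ha
  | succ n ih => rw [pow_succ', MulAut.mul_apply]; exact hH _ ih

theorem apply_mem_iff_of_pow_eq_one {ℓ : ℕ} (hℓ : ℓ ≠ 0) (hσ : σ ^ ℓ = 1)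
    (hH : ∀ g ∈ H, σ g ∈ H) (a : G) : σ a ∈ H ↔ a ∈ H := by
  refine ⟨fun ha => ?_, hH a⟩
  have := pow_apply_mem hH (ℓ - 1) ha
  rwa [← MulAut.mul_apply, pow_sub_one_mul hℓ, hσ, MulAut.one_apply] at this

theorem mk_eq_mk_iff {a b : G} :
    Quotient.mk (QuotientGroup.rightRel H) a = Quotient.mk _ b ↔ b * a⁻¹ ∈ H :=
  Quotient.eq.trans QuotientGroup.rightRel_apply

theorem mk_mul_of_mem {h : G} (hh : h ∈ H) (x : G) :
    Quotient.mk (QuotientGroup.rightRel H) (h * x) = Quotient.mk _ x :=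
  mk_eq_mk_iff.2 (by simpa using H.inv_mem hh)

theorem inv_apply_mul_inv_mem_iff (hH : ∀ a, σ a ∈ H ↔ a ∈ H) {r : G} (hr : σ r = r) (x : G) :
    σ⁻¹ x * r⁻¹ ∈ H ↔ x * r⁻¹ ∈ H := by
  rw [← hH]
  simp [hr]

theorem mk_inv_apply_eq (hH : ∀ a, σ a ∈ H ↔ a ∈ H) {r x : G} (hr : σ r = r)
    (hx : x * r⁻¹ ∈ H) : Quotient.mk (QuotientGroup.rightRel H) (σ⁻¹ x) = Quotient.mk _ x :=
  (mk_eq_mk_iff.2 ((inv_apply_mul_inv_mem_iff hH hr x).2 hx)).symm.trans (mk_eq_mk_iff.2 hx)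

variable (σ H) in
/-- Induced by `σ⁻¹` rather than `σ`, so that its powers match those of `twist` below. -/
def cosetPerm (hH : ∀ a, σ a ∈ H ↔ a ∈ H) :
    Equiv.Perm (Quotient (QuotientGroup.rightRel H)) :=
  Quotient.congr (σ⁻¹ : MulAut G).toEquiv fun a b => by
    rw [QuotientGroup.rightRel_apply, QuotientGroup.rightRel_apply]
    simpa using hH ((σ⁻¹ : MulAut G) b * ((σ⁻¹ : MulAut G) a)⁻¹)

variable (hH : ∀ a, σ a ∈ H ↔ a ∈ H)

theorem cosetPerm_mk (x : G) :
    cosetPerm σ H hH (Quotient.mk _ x) = Quotient.mk _ (σ⁻¹ x) :=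
  Quotient.congr_mk _ _ x

theorem cosetPerm_pow_mk (k : ℕ) (x : G) :
    (cosetPerm σ H hH ^ k) (Quotient.mk _ x) = Quotient.mk _ ((σ⁻¹ ^ k) x) := by
  induction k with
  | zero => rfl
  | succ k ih =>
    rw [pow_succ', Equiv.Perm.mul_apply, ih, cosetPerm_mk, pow_succ', MulAut.mul_apply]

theorem cosetPerm_pow_eq_one {ℓ : ℕ} (hσ : σ ^ ℓ = 1) : cosetPerm σ H hH ^ ℓ = 1 := by
  ext q
  induction q using Quotient.ind with
  | _ x => rw [cosetPerm_pow_mk, inv_pow, hσ, inv_one]; rfl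

theorem cosetPerm_mk_of_apply_eq {g : G} (hg : σ g = g) :
    cosetPerm σ H hH (Quotient.mk _ g) = Quotient.mk _ g := by
  rw [cosetPerm_mk, MulAut.inv_apply, (MulEquiv.symm_apply_eq σ).2 hg.symm]

theorem exists_apply_eq_and_mk_eq
    (hcoset : ∀ g : G, σ g * g⁻¹ ∈ H → ∃ h g₀ : G, h ∈ H ∧ σ g₀ = g₀ ∧ g = h * g₀)
    (q : Quotient (QuotientGroup.rightRel H)) (hq : cosetPerm σ H hH q = q) :
    ∃ g₀, σ g₀ = g₀ ∧ Quotient.mk _ g₀ = q := by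
  induction q using Quotient.ind with
  | _ g =>
    rw [cosetPerm_mk, mk_eq_mk_iff, ← hH] at hq
    obtain ⟨h, g₀, hh, hg₀, rfl⟩ := hcoset g (by simpa using hq)
    exact ⟨g₀, hg₀, mk_mul_of_mem hh g₀ |>.symm⟩

end Cosets

section InducedModule

variable {G : Type*} [Group G] {H : Subgroup G}
  {R V : Type*} [CommSemiring R] [AddCommGroup V] [Module R V]
  {σ : MulAut G} {ρ : Representation R H V} {σV : Module.End R V}

variable (ρ) in
/-- `Ind_H^G V`. -/
def ind : Submodule R (G → V) where
  carrier := {f | ∀ (h : H) (g : G), f (h * g) = ρ h (f g)}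
  add_mem' hf hf' h g := by simp [hf h g, hf' h g]
  zero_mem' h g := by simp
  smul_mem' c f hf h g := by simp [hf h g]

theorem mem_ind {f : G → V} : f ∈ ind ρ ↔ ∀ (h : H) (g : G), f (h * g) = ρ h (f g) :=
  Iff.rfl

variable (σ σV) in
/-- The action of the generator `σ` of `Γ`. -/
def twist : Module.End R (G → V) where
  toFun f g := σV (f (σ⁻¹ g))
  map_add' f f' := by ext; simp
  map_smul' c f := by ext; simp

theorem twist_apply (f : G → V) (g : G) : twist σ σV f g = σV (f (σ⁻¹ g)) := rfl

theorem twist_pow_apply (i : ℕ) (f : G → V) (g : G) :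
    (twist σ σV ^ i) f g = (σV ^ i) (f ((σ⁻¹ ^ i) g)) := by
  induction i generalizing g with
  | zero => rfl
  | succ i ih =>
    rw [pow_succ', Module.End.mul_apply, twist_apply, ih, pow_succ' σV, pow_succ σ⁻¹,
      Module.End.mul_apply, MulAut.mul_apply]

theorem inv_apply_of_apply_eq {g : G} (hg : σ g = g) : σ⁻¹ g = g := by
  rw [MulAut.inv_apply, MulEquiv.symm_apply_eq, hg]

theorem inv_pow_apply_of_apply_eq {g : G} (hg : σ g = g) (i : ℕ) : (σ⁻¹ ^ i) g = g := by
  induction i with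
  | zero => rfl
  | succ i ih => rw [pow_succ', MulAut.mul_apply, ih, inv_apply_of_apply_eq hg]

theorem sum_twist_pow_apply (ℓ : ℕ) (f : G → V) (g : G) :
    (∑ i ∈ range ℓ, twist σ σV ^ i) f g = ∑ i ∈ range ℓ, (σV ^ i) (f ((σ⁻¹ ^ i) g)) := by
  simp only [LinearMap.sum_apply, Finset.sum_apply, twist_pow_apply]

theorem sum_twist_pow_apply_of_apply_eq (ℓ : ℕ) (f : G → V) {g : G} (hg : σ g = g) :
    (∑ i ∈ range ℓ, twist σ σV ^ i) f g = (∑ i ∈ range ℓ, σV ^ i) (f g) := by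
  simp only [sum_twist_pow_apply, inv_pow_apply_of_apply_eq hg, LinearMap.sum_apply]

variable (hH : ∀ a, σ a ∈ H ↔ a ∈ H)

variable (ρ σV) in
/-- `V` is a module for `H ⋊ Γ`. -/
def IsCompatible : Prop :=
  ∀ (h : H) (v : V), σV (ρ h v) = ρ ⟨σ h, (hH h).2 h.2⟩ (σV v)

theorem twist_mem_ind (hcompat : IsCompatible ρ σV hH) {f : G → V} (hf : f ∈ ind ρ) :
    twist σ σV f ∈ ind ρ := by
  intro h g
  have hmem : σ⁻¹ (h : G) ∈ H := by rw [← hH]; simp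
  rw [twist_apply, twist_apply, map_mul,
    show f (σ⁻¹ h * σ⁻¹ g) = ρ ⟨_, hmem⟩ (f (σ⁻¹ g)) from hf ⟨_, hmem⟩ _, hcompat]
  congr 2
  ext
  simp

theorem twist_pow_mem_ind (hcompat : IsCompatible ρ σV hH) {f : G → V} (hf : f ∈ ind ρ)
    (i : ℕ) : (twist σ σV ^ i) f ∈ ind ρ := by
  induction i with
  | zero => exact hf
  | succ i ih => rw [pow_succ', Module.End.mul_apply]; exact twist_mem_ind hH hcompat ih

variable (R V) in
open Classical in
noncomputable def restrictCosets (s : Set (Quotient (QuotientGroup.rightRel H))) :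
    Module.End R (G → V) where
  toFun f x := if Quotient.mk _ x ∈ s then f x else 0
  map_add' f f' := by ext x; by_cases hx : Quotient.mk _ x ∈ s <;> simp [hx]
  map_smul' c f := by ext x; by_cases hx : Quotient.mk _ x ∈ s <;> simp [hx]

open Classical in
theorem restrictCosets_apply (s : Set (Quotient (QuotientGroup.rightRel H))) (f : G → V)
    (x : G) : restrictCosets R V s f x = if Quotient.mk _ x ∈ s then f x else 0 := rfl

theorem restrictCosets_apply_of_mem {s : Set (Quotient (QuotientGroup.rightRel H))}
    (f : G → V) {x : G} (hx : Quotient.mk _ x ∈ s) : restrictCosets R V s f x = f x :=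
  if_pos hx

theorem restrictCosets_apply_of_notMem {s : Set (Quotient (QuotientGroup.rightRel H))}
    (f : G → V) {x : G} (hx : Quotient.mk _ x ∉ s) : restrictCosets R V s f x = 0 := if_neg hx

theorem restrictCosets_add_compl (s : Set (Quotient (QuotientGroup.rightRel H))) (f : G → V) :
    restrictCosets R V s f + restrictCosets R V sᶜ f = f := by
  ext x
  by_cases hx : Quotient.mk _ x ∈ s <;> simp [restrictCosets_apply, hx]

theorem restrictCosets_mem_ind (s : Set (Quotient (QuotientGroup.rightRel H))) {f : G → V}
    (hf : f ∈ ind ρ) : restrictCosets R V s f ∈ ind ρ := by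
  intro h g
  by_cases hg : Quotient.mk _ g ∈ s <;>
    simp [restrictCosets_apply, mk_mul_of_mem h.2, hg, hf h g]

theorem twist_mul_restrictCosets (s : Set (Quotient (QuotientGroup.rightRel H))) :
    twist σ σV * restrictCosets R V s =
      restrictCosets R V (cosetPerm σ H hH ⁻¹' s) * twist σ σV := by
  ext f x
  by_cases hx : Quotient.mk _ (σ⁻¹ x) ∈ s <;>
    simp only [Module.End.mul_apply, restrictCosets_apply, twist_apply, Set.mem_preimage,
      cosetPerm_mk, hx, ↓reduceIte, map_zero]

variable (R V) in
noncomputable def orbitRepProj (k : ℕ) : Module.End R (G → V) :=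
  restrictCosets R V ((cosetPerm σ H hH ^ k) ⁻¹'
    {q | cosetPerm σ H hH q ≠ q ∧ IsOrbitRep (cosetPerm σ H hH) q})

theorem twist_mul_orbitRepProj (k : ℕ) :
    twist σ σV * orbitRepProj R V hH k = orbitRepProj R V hH (k + 1) * twist σ σV := by
  rw [orbitRepProj, twist_mul_restrictCosets, orbitRepProj, pow_succ, Equiv.Perm.coe_mul,
    Set.preimage_comp]

theorem orbitRepProj_of_pow_eq_one {ℓ : ℕ} (hσ : σ ^ ℓ = 1) :
    orbitRepProj R V hH ℓ = orbitRepProj R V hH 0 := by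
  rw [orbitRepProj, orbitRepProj, cosetPerm_pow_eq_one hH hσ, pow_zero]

theorem sum_orbitRepProj {ℓ : ℕ} (hℓ : ℓ.Prime) (hσ : σ ^ ℓ = 1) (f : G → V) :
    ∑ k ∈ range ℓ, orbitRepProj R V hH k f =
      restrictCosets R V {q | cosetPerm σ H hH q = q}ᶜ f := by
  ext x
  rw [Finset.sum_apply]
  by_cases hq : cosetPerm σ H hH (Quotient.mk _ x) = Quotient.mk _ x
  · rw [restrictCosets_apply_of_notMem _ (by simpa using hq)]
    exact sum_eq_zero fun k _ => restrictCosets_apply_of_notMem _ (by simp [hq])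
  · obtain ⟨k, ⟨hk, hkrep⟩, huniq⟩ :=
      existsUnique_isOrbitRep_pow_apply hℓ (cosetPerm_pow_eq_one hH hσ) hq
    rw [restrictCosets_apply_of_mem _ (by simpa using hq),
      sum_eq_single_of_mem k (mem_range.2 hk) fun j hj hjk =>
        restrictCosets_apply_of_notMem _ (by
          rintro ⟨-, hj'⟩
          exact hjk (huniq j ⟨mem_range.1 hj, hj'⟩))]
    exact restrictCosets_apply_of_mem _ ⟨(apply_pow_apply_eq_iff _ k _).not.2 hq, hkrep⟩

variable (σ ρ) in
open Classical in
/-- Once `rep` picks a `σ`-fixed element of every `σ`-stable coset, the condition below holds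
exactly on the `σ`-stable cosets (`extendFromReps_eq_restrictCosets`); stating it this way
keeps the proof of `x * (rep q)⁻¹ ∈ H` at hand. -/
noncomputable def extendFromReps (rep : Quotient (QuotientGroup.rightRel H) → G) :
    (G → V) →ₗ[R] (G → V) where
  toFun ψ x :=
    if hx : σ (rep (Quotient.mk _ x)) = rep (Quotient.mk _ x) ∧
        x * (rep (Quotient.mk _ x))⁻¹ ∈ H then
      ρ ⟨_, hx.2⟩ (ψ (rep (Quotient.mk _ x)))
    else 0
  map_add' ψ ψ' := by ext x; simp only [Pi.add_apply]; split_ifs <;> simp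
  map_smul' c ψ := by ext x; simp only [Pi.smul_apply, RingHom.id_apply]; split_ifs <;> simp

variable {rep : Quotient (QuotientGroup.rightRel H) → G}

open Classical in
theorem extendFromReps_apply (ψ : G → V) (x : G) :
    extendFromReps σ ρ rep ψ x =
      if hx : σ (rep (Quotient.mk _ x)) = rep (Quotient.mk _ x) ∧
          x * (rep (Quotient.mk _ x))⁻¹ ∈ H then
        ρ ⟨_, hx.2⟩ (ψ (rep (Quotient.mk _ x)))
      else 0 := rfl

theorem extendFromReps_mem_ind (ψ : G → V) : extendFromReps σ ρ rep ψ ∈ ind ρ := by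
  intro h x
  rw [extendFromReps_apply, extendFromReps_apply, mk_mul_of_mem h.2]
  set r := rep (Quotient.mk _ x)
  by_cases hc : σ r = r ∧ x * r⁻¹ ∈ H
  · have hc' : σ r = r ∧ h * x * r⁻¹ ∈ H :=
      ⟨hc.1, by rw [mul_assoc]; exact H.mul_mem h.2 hc.2⟩
    rw [dif_pos hc', dif_pos hc, ← Module.End.mul_apply, ← map_mul]
    congr 2
    ext
    simp [mul_assoc]
  · have hc' : ¬(σ r = r ∧ h * x * r⁻¹ ∈ H) := fun ⟨h1, h2⟩ =>
      hc ⟨h1, by simpa [mul_assoc] using H.mul_mem (H.inv_mem h.2) h2⟩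
    rw [dif_neg hc', dif_neg hc, map_zero]

theorem twist_extendFromReps (hcompat : IsCompatible ρ σV hH) (ψ : G → V) :
    twist σ σV (extendFromReps σ ρ rep ψ) = extendFromReps σ ρ rep (fun g => σV (ψ g)) := by
  ext x
  rw [twist_apply]
  by_cases hc : σ (rep (Quotient.mk _ x)) = rep (Quotient.mk _ x) ∧
      x * (rep (Quotient.mk _ x))⁻¹ ∈ H
  · rw [extendFromReps_apply, extendFromReps_apply, mk_inv_apply_eq hH hc.1 hc.2,
      dif_pos ⟨hc.1, (inv_apply_mul_inv_mem_iff hH hc.1 x).2 hc.2⟩, dif_pos hc, hcompat]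
    congr 2
    ext
    simp [hc.1]
  · have hc' : ¬(σ (rep (Quotient.mk _ (σ⁻¹ x))) = rep (Quotient.mk _ (σ⁻¹ x)) ∧
        σ⁻¹ x * (rep (Quotient.mk _ (σ⁻¹ x)))⁻¹ ∈ H) := by
      rintro ⟨h1, h2⟩
      have h3 := (inv_apply_mul_inv_mem_iff hH h1 x).1 h2
      have hmk := mk_inv_apply_eq hH h1 h3
      rw [hmk] at h1 h3
      exact hc ⟨h1, h3⟩
    rw [extendFromReps_apply, extendFromReps_apply, dif_neg hc', dif_neg hc, map_zero]

theorem twist_pow_extendFromReps (hcompat : IsCompatible ρ σV hH) (ψ : G → V) (i : ℕ) :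
    (twist σ σV ^ i) (extendFromReps σ ρ rep ψ) =
      extendFromReps σ ρ rep (fun g => (σV ^ i) (ψ g)) := by
  induction i with
  | zero => rfl
  | succ i ih =>
    simp only [pow_succ' _ i, Module.End.mul_apply, ih, twist_extendFromReps hH hcompat]

theorem sum_twist_pow_extendFromReps (hcompat : IsCompatible ρ σV hH) (ψ : G → V) (ℓ : ℕ) :
    (∑ i ∈ range ℓ, twist σ σV ^ i) (extendFromReps σ ρ rep ψ) =
      extendFromReps σ ρ rep (fun g => (∑ i ∈ range ℓ, σV ^ i) (ψ g)) := by
  simp only [LinearMap.sum_apply, twist_pow_extendFromReps hH hcompat, ← map_sum]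
  congr 1
  ext g
  simp

theorem extendFromReps_congr {ψ ψ' : G → V} (h : ∀ g, σ g = g → ψ g = ψ' g) :
    extendFromReps σ ρ rep ψ = extendFromReps σ ρ rep ψ' := by
  ext x
  rw [extendFromReps_apply, extendFromReps_apply]
  split_ifs with hx
  · rw [h _ hx.1]
  · rfl

variable {hH} in
theorem extendFromReps_eq_restrictCosets
    (hrep : ∀ q, cosetPerm σ H hH q = q → σ (rep q) = rep q ∧ Quotient.mk _ (rep q) = q)
    {f : G → V} (hf : f ∈ ind ρ) :
    extendFromReps σ ρ rep f = restrictCosets R V {q | cosetPerm σ H hH q = q} f := by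
  ext x
  rw [extendFromReps_apply]
  by_cases hx : cosetPerm σ H hH (Quotient.mk _ x) = Quotient.mk _ x
  · obtain ⟨h1, h2⟩ := hrep _ hx
    have hmem := mk_eq_mk_iff.1 h2
    rw [dif_pos ⟨h1, hmem⟩, restrictCosets_apply_of_mem (s := {q | cosetPerm σ H hH q = q}) _ hx,
      ← hf ⟨_, hmem⟩, inv_mul_cancel_right]
  · rw [restrictCosets_apply_of_notMem (s := {q | cosetPerm σ H hH q = q}) _ hx, dif_neg]
    rintro ⟨h1, h2⟩
    rw [← mk_eq_mk_iff.2 h2] at hx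
    exact hx (cosetPerm_mk_of_apply_eq hH h1)

variable {hH} in
theorem exists_extendFromReps_apply_eq
    (hrep : ∀ q, cosetPerm σ H hH q = q → σ (rep q) = rep q ∧ Quotient.mk _ (rep q) = q)
    (ψ : G → V) {g : G} (hg : σ g = g) :
    ∃ (h : H) (r : G), σ h = h ∧ σ r = r ∧ h * r = g ∧
      extendFromReps σ ρ rep ψ g = ρ h (ψ r) := by
  obtain ⟨h1, h2⟩ := hrep _ (cosetPerm_mk_of_apply_eq hH hg)
  have hmem := mk_eq_mk_iff.1 h2
  exact ⟨⟨_, hmem⟩, _, by simp [h1, hg], h1, inv_mul_cancel_right _ _, dif_pos ⟨h1, hmem⟩⟩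

variable {hH} in
theorem exists_extendFromReps_sub_eq
    (hrep : ∀ q, cosetPerm σ H hH q = q → σ (rep q) = rep q ∧ Quotient.mk _ (rep q) = q)
    (T : Module.End R V) {φ : G → V}
    (hφ : ∀ (h : H) (g : G), σ h = h → σ g = g → ∃ v, φ (h * g) - ρ h (φ g) = T v)
    {g : G} (hg : σ g = g) : ∃ v, extendFromReps σ ρ rep φ g - φ g = T v := by
  obtain ⟨h, r, hh, hr, rfl, hval⟩ := exists_extendFromReps_apply_eq (ρ := ρ) hrep φ hg
  obtain ⟨v, hv⟩ := hφ h r hh hr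
  exact ⟨-v, by rw [hval, map_neg, ← hv, neg_sub]⟩

section TateCohomology

variable {ℓ : ℕ}

theorem exists_sum_twist_pow_eq_iff (hℓ : ℓ.Prime) (hσ : σ ^ ℓ = 1)
    (hcompat : IsCompatible ρ σV hH)
    (hfixed : ∀ q, cosetPerm σ H hH q = q → ∃ g, σ g = g ∧ Quotient.mk _ g = q) {f : G → V}
    (hf : f ∈ ind ρ) (hinv : twist σ σV f = f) :
    (∃ f' ∈ ind ρ, (∑ i ∈ range ℓ, twist σ σV ^ i) f' = f) ↔
      ∀ g, σ g = g → ∃ v, (∑ i ∈ range ℓ, σV ^ i) v = f g := by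
  refine ⟨?_, fun hv => ?_⟩
  · rintro ⟨f', -, rfl⟩ g hg
    exact ⟨f' g, (sum_twist_pow_apply_of_apply_eq ℓ f' hg).symm⟩
  choose! w hw using hv
  choose! rep hrep using hfixed
  refine ⟨extendFromReps σ ρ rep w + orbitRepProj R V hH 0 f,
    add_mem (extendFromReps_mem_ind w) (restrictCosets_mem_ind _ hf), ?_⟩
  rw [map_add, sum_twist_pow_extendFromReps hH hcompat, extendFromReps_congr hw,
    extendFromReps_eq_restrictCosets hrep hf,
    sum_pow_apply_eq_of_apply_eq (twist_mul_orbitRepProj hH) hinv, sum_orbitRepProj hH hℓ hσ,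
    restrictCosets_add_compl]

theorem exists_twist_eq_self_lift (hcompat : IsCompatible ρ σV hH)
    (hfixed : ∀ q, cosetPerm σ H hH q = q → ∃ g, σ g = g ∧ Quotient.mk _ g = q) {φ : G → V}
    (hφ : ∀ g, σ g = g → σV (φ g) = φ g)
    (hφH : ∀ (h : H) (g : G), σ h = h → σ g = g →
      ∃ v, φ (h * g) - ρ h (φ g) = (∑ i ∈ range ℓ, σV ^ i) v) :
    ∃ f ∈ ind ρ, twist σ σV f = f ∧
      ∀ g, σ g = g → ∃ v, f g - φ g = (∑ i ∈ range ℓ, σV ^ i) v := by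
  choose! rep hrep using hfixed
  exact ⟨extendFromReps σ ρ rep φ, extendFromReps_mem_ind φ,
    by rw [twist_extendFromReps hH hcompat, extendFromReps_congr hφ],
    fun g hg => exists_extendFromReps_sub_eq hrep _ hφH hg⟩

theorem exists_sub_twist_eq_iff (hℓ : ℓ.Prime) (hσ : σ ^ ℓ = 1)
    (hcompat : IsCompatible ρ σV hH)
    (hfixed : ∀ q, cosetPerm σ H hH q = q → ∃ g, σ g = g ∧ Quotient.mk _ g = q) {f : G → V}
    (hf : f ∈ ind ρ) (hN : (∑ i ∈ range ℓ, twist σ σV ^ i) f = 0) :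
    (∃ f' ∈ ind ρ, f' - twist σ σV f' = f) ↔ ∀ g, σ g = g → ∃ v, v - σV v = f g := by
  refine ⟨?_, fun hv => ?_⟩
  · rintro ⟨f', -, rfl⟩ g hg
    exact ⟨f' g, by rw [Pi.sub_apply, twist_apply, inv_apply_of_apply_eq hg]⟩
  choose! w hw using hv
  choose! rep hrep using hfixed
  set T := ∑ k ∈ range ℓ, orbitRepProj R V hH k ((∑ j ∈ range k, twist σ σV ^ j) f)
  have hT : T - twist σ σV T = ∑ k ∈ range ℓ, orbitRepProj R V hH k f := by
    simpa only [LinearMap.sub_apply, Module.End.one_apply] using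
      sub_apply_sum_eq_of_sum_pow_apply_eq_zero (twist_mul_orbitRepProj hH)
        (orbitRepProj_of_pow_eq_one hH hσ) hN
  have hTmem : T ∈ ind ρ := sum_mem fun k _ => restrictCosets_mem_ind _ <| by
    rw [LinearMap.sum_apply]
    exact sum_mem fun j _ => twist_pow_mem_ind hH hcompat hf j
  refine ⟨extendFromReps σ ρ rep w + T, add_mem (extendFromReps_mem_ind w) hTmem, ?_⟩
  calc extendFromReps σ ρ rep w + T - twist σ σV (extendFromReps σ ρ rep w + T)
      = extendFromReps σ ρ rep (w - fun g => σV (w g)) + (T - twist σ σV T) := by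
        rw [map_add, twist_extendFromReps hH hcompat, map_sub]
        abel
    _ = f := by
        rw [extendFromReps_congr (ψ := w - fun g => σV (w g)) hw,
          extendFromReps_eq_restrictCosets hrep hf, hT, sum_orbitRepProj hH hℓ hσ,
          restrictCosets_add_compl]

theorem exists_sum_twist_pow_eq_zero_lift (hcompat : IsCompatible ρ σV hH)
    (hfixed : ∀ q, cosetPerm σ H hH q = q → ∃ g, σ g = g ∧ Quotient.mk _ g = q) {φ : G → V}
    (hφ : ∀ g, σ g = g → (∑ i ∈ range ℓ, σV ^ i) (φ g) = 0)
    (hφH : ∀ (h : H) (g : G), σ h = h → σ g = g → ∃ v, φ (h * g) - ρ h (φ g) = v - σV v) :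
    ∃ f ∈ ind ρ, (∑ i ∈ range ℓ, twist σ σV ^ i) f = 0 ∧
      ∀ g, σ g = g → ∃ v, f g - φ g = v - σV v := by
  choose! rep hrep using hfixed
  exact ⟨extendFromReps σ ρ rep φ, extendFromReps_mem_ind φ,
    by rw [sum_twist_pow_extendFromReps hH hcompat, extendFromReps_congr (ψ' := 0) hφ,
      map_zero],
    fun g hg => exists_extendFromReps_sub_eq hrep (1 - σV) hφH hg⟩

end TateCohomology

end InducedModule

end TateInduced

open TateInduced in
theorem stmt_11_general (ℓ : ℕ) (hℓ : ℓ.Prime)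
    {G : Type*} [Group G] (σG : MulAut G) (hσG : σG ^ ℓ = 1)
    (H : Subgroup G) (hH : ∀ g ∈ H, σG g ∈ H)
    {R V : Type*} [CommRing R] [AddCommGroup V] [Module R V]
    (ρ : Representation R H V)
    (σV : Module.End R V)
    (hcompat : ∀ (h : H) (v : V),
      σV (ρ h v) = ρ (⟨σG (h : G), hH _ h.2⟩ : H) (σV v))
    (hcoset : ∀ g : G, σG g * g⁻¹ ∈ H →
      ∃ (h g₀ : G), h ∈ H ∧ σG g₀ = g₀ ∧ g = h * g₀) :
    -- i = 0: injectivity (a class restricts to zero iff it is zero)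
    (∀ f : G → V, (∀ (h : H) (g : G), f ((h : G) * g) = ρ h (f g)) →
      (∀ g : G, σV (f (σG⁻¹ g)) = f g) →
      ((∃ f' : G → V, (∀ (h : H) (g : G), f' ((h : G) * g) = ρ h (f' g)) ∧
          ∀ g : G, (∑ i ∈ Finset.range ℓ, (σV ^ i) (f' ((σG⁻¹ ^ i) g))) = f g) ↔
        ∀ g : G, σG g = g → ∃ v : V, (∑ i ∈ Finset.range ℓ, σV ^ i) v = f g)) ∧
    -- i = 0: surjectivity onto Ind_{H^σ}^{G^σ} Ĥ⁰(Γ, V)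
    (∀ φ : G → V, (∀ g : G, σG g = g → σV (φ g) = φ g) →
      (∀ (h : H) (g : G), σG (h : G) = (h : G) → σG g = g →
        ∃ v : V, φ ((h : G) * g) - ρ h (φ g) = (∑ i ∈ Finset.range ℓ, σV ^ i) v) →
      ∃ f : G → V, (∀ (h : H) (g : G), f ((h : G) * g) = ρ h (f g)) ∧
        (∀ g : G, σV (f (σG⁻¹ g)) = f g) ∧
        ∀ g : G, σG g = g →
          ∃ v : V, f g - φ g = (∑ i ∈ Finset.range ℓ, σV ^ i) v) ∧
    -- i = 1: injectivity
    (∀ f : G → V, (∀ (h : H) (g : G), f ((h : G) * g) = ρ h (f g)) →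
      (∀ g : G, (∑ i ∈ Finset.range ℓ, (σV ^ i) (f ((σG⁻¹ ^ i) g))) = 0) →
      ((∃ f' : G → V, (∀ (h : H) (g : G), f' ((h : G) * g) = ρ h (f' g)) ∧
          ∀ g : G, f' g - σV (f' (σG⁻¹ g)) = f g) ↔
        ∀ g : G, σG g = g → ∃ v : V, v - σV v = f g)) ∧
    -- i = 1: surjectivity onto Ind_{H^σ}^{G^σ} Ĥ¹(Γ, V)
    (∀ φ : G → V,
      (∀ g : G, σG g = g → (∑ i ∈ Finset.range ℓ, σV ^ i) (φ g) = 0) →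
      (∀ (h : H) (g : G), σG (h : G) = (h : G) → σG g = g →
        ∃ v : V, φ ((h : G) * g) - ρ h (φ g) = v - σV v) →
      ∃ f : G → V, (∀ (h : H) (g : G), f ((h : G) * g) = ρ h (f g)) ∧
        (∀ g : G, (∑ i ∈ Finset.range ℓ, (σV ^ i) (f ((σG⁻¹ ^ i) g))) = 0) ∧
        ∀ g : G, σG g = g → ∃ v : V, f g - φ g = v - σV v) := by
  have hH' := apply_mem_iff_of_pow_eq_one hℓ.ne_zero hσG hH
  have hfixed := exists_apply_eq_and_mk_eq hH' hcoset
  refine ⟨fun f hf hinv => ?_, fun φ hφ hφH => ?_, fun f hf hN => ?_, fun φ hφ hφH => ?_⟩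
  · simpa only [← mem_ind, funext_iff, sum_twist_pow_apply] using
      exists_sum_twist_pow_eq_iff hH' hℓ hσG hcompat hfixed hf (funext hinv)
  · simpa only [← mem_ind, funext_iff, twist_apply] using
      exists_twist_eq_self_lift hH' hcompat hfixed hφ hφH
  · simpa only [← mem_ind, funext_iff, Pi.sub_apply, twist_apply] using
      exists_sub_twist_eq_iff hH' hℓ hσG hcompat hfixed hf
        (funext fun g => (sum_twist_pow_apply ℓ f g).trans (hN g))
  · simpa only [← mem_ind, funext_iff, sum_twist_pow_apply, Pi.zero_apply] using
      exists_sum_twist_pow_eq_zero_lift hH' hcompat hfixed hφ hφH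

/-- Tate cohomology of an induced representation (Mackey/Shapiro for fixed
points): `G` a finite group with automorphism `σG` of prime order `ℓ`,
`H ≤ G` a `σ`-stable subgroup, `V` an `R`-module with compatible `H`- and
`Γ = ⟨σ⟩`-actions. Assume every `σ`-fixed coset in `H\G` contains a `σ`-fixed
element (i.e. `G^σ/H^σ ≃ (G/H)^σ`). Then restriction of functions to `G^σ`
induces, for `i ∈ {0,1}`, an isomorphism
`Ĥ^i(Γ, Ind_H^G V) ≅ Ind_{H^σ}^{G^σ} Ĥ^i(Γ, V)`, stated elementwise:
the induced map on classes is well-defined and injective (the two `↔` clauses)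
and surjective (the two `∃` clauses). Here `Ind_H^G V` is the set of `f : G → V`
with `f (h g) = h · f g`, `Γ` acting by `(σ · f) g = σV (f (σG⁻¹ g))`. -/
theorem stmt_11 (ℓ : ℕ) (hℓ : ℓ.Prime)
    {G : Type*} [Group G] [Finite G] (σG : MulAut G) (hσG : σG ^ ℓ = 1)
    (H : Subgroup G) (hH : ∀ g ∈ H, σG g ∈ H)
    {R V : Type*} [CommRing R] [AddCommGroup V] [Module R V]
    (ρ : Representation R H V)
    (σV : Module.End R V) (hσV : σV ^ ℓ = 1)
    (hcompat : ∀ (h : H) (v : V),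
      σV (ρ h v) = ρ (⟨σG (h : G), hH _ h.2⟩ : H) (σV v))
    (hcoset : ∀ g : G, σG g * g⁻¹ ∈ H →
      ∃ (h g₀ : G), h ∈ H ∧ σG g₀ = g₀ ∧ g = h * g₀) :
    -- i = 0: injectivity (a class restricts to zero iff it is zero)
    (∀ f : G → V, (∀ (h : H) (g : G), f ((h : G) * g) = ρ h (f g)) →
      (∀ g : G, σV (f (σG⁻¹ g)) = f g) →
      ((∃ f' : G → V, (∀ (h : H) (g : G), f' ((h : G) * g) = ρ h (f' g)) ∧
          ∀ g : G, (∑ i ∈ Finset.range ℓ, (σV ^ i) (f' ((σG⁻¹ ^ i) g))) = f g) ↔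
        ∀ g : G, σG g = g → ∃ v : V, (∑ i ∈ Finset.range ℓ, σV ^ i) v = f g)) ∧
    -- i = 0: surjectivity onto Ind_{H^σ}^{G^σ} Ĥ⁰(Γ, V)
    (∀ φ : G → V, (∀ g : G, σG g = g → σV (φ g) = φ g) →
      (∀ (h : H) (g : G), σG (h : G) = (h : G) → σG g = g →
        ∃ v : V, φ ((h : G) * g) - ρ h (φ g) = (∑ i ∈ Finset.range ℓ, σV ^ i) v) →
      ∃ f : G → V, (∀ (h : H) (g : G), f ((h : G) * g) = ρ h (f g)) ∧
        (∀ g : G, σV (f (σG⁻¹ g)) = f g) ∧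
        ∀ g : G, σG g = g →
          ∃ v : V, f g - φ g = (∑ i ∈ Finset.range ℓ, σV ^ i) v) ∧
    -- i = 1: injectivity
    (∀ f : G → V, (∀ (h : H) (g : G), f ((h : G) * g) = ρ h (f g)) →
      (∀ g : G, (∑ i ∈ Finset.range ℓ, (σV ^ i) (f ((σG⁻¹ ^ i) g))) = 0) →
      ((∃ f' : G → V, (∀ (h : H) (g : G), f' ((h : G) * g) = ρ h (f' g)) ∧
          ∀ g : G, f' g - σV (f' (σG⁻¹ g)) = f g) ↔
        ∀ g : G, σG g = g → ∃ v : V, v - σV v = f g)) ∧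
    -- i = 1: surjectivity onto Ind_{H^σ}^{G^σ} Ĥ¹(Γ, V)
    (∀ φ : G → V,
      (∀ g : G, σG g = g → (∑ i ∈ Finset.range ℓ, σV ^ i) (φ g) = 0) →
      (∀ (h : H) (g : G), σG (h : G) = (h : G) → σG g = g →
        ∃ v : V, φ ((h : G) * g) - ρ h (φ g) = v - σV v) →
      ∃ f : G → V, (∀ (h : H) (g : G), f ((h : G) * g) = ρ h (f g)) ∧
        (∀ g : G, (∑ i ∈ Finset.range ℓ, (σV ^ i) (f ((σG⁻¹ ^ i) g))) = 0) ∧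
        ∀ g : G, σG g = g → ∃ v : V, f g - φ g = v - σV v) :=
  stmt_11_general ℓ hℓ σG hσG H hH ρ σV hcompat hcoset
end
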